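/- arXiv:1009.3948 — 7 statements merged into one kernel-verified Lean document; each statement's English description precedes it below -/
import Mathlib

section
/- Let a, b, c be positive reals with b/a ≥ e^(2e) and e^e > (c/b)². Define φ(x) = √(x·ln(ln x)) for x ≥ e^e and φ(x) = 1 for x < e^e, and U(x) = -a·x + 2b·φ(x) + c. Then U(x) < 0 for every x > (18b²/a²)·ln(ln(3b/a)). -/
/-!
Put `s = 3b/a`, so the threshold is `x₀ = 2 s² ln ln s`. Since `x₀ ≤ s⁴`, `ln ln x₀ ≤ 2 ln ln s`,
i.e. `s² ln ln x₀ ≤ x₀`; concavity of `ln ∘ ln` (slope at most `1/x₀` beyond `x₀`) carries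
`s² ln ln x < x` on to all `x > x₀`. Hence `2b φ(x) < 2b x / s = 2ax/3`, and `c < b s < ax/3`
because `(c/b)² < e^e ≤ s`.
-/

open Real

noncomputable def phi (x : ℝ) : ℝ :=
  if Real.exp (Real.exp 1) ≤ x then Real.sqrt (x * Real.log (Real.log x)) else 1

lemma log_log_le_add_div {x y : ℝ} (hy : exp 1 ≤ y) (hyx : y ≤ x) :
    log (log x) ≤ log (log y) + (x - y) / y := by
  have hy0 : 0 < y := (exp_pos 1).trans_le hy
  have hly : 1 ≤ log y := (le_log_iff_exp_le hy0).2 hy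
  have hlyx : log y ≤ log x := log_le_log hy0 hyx
  have hlog : log (log x) - log (log y) ≤ log x / log y - 1 := by
    rw [← log_div (by linarith) (by linarith)]
    exact log_le_sub_one_of_pos (div_pos (by linarith) (by linarith))
  have hdiv : log x / log y - 1 ≤ log x - log y := by
    rw [div_sub_one (by linarith)]
    exact div_le_self (by linarith) hly
  have hlin : log x - log y ≤ (x - y) / y := by
    rw [← log_div (by linarith) hy0.ne', ← div_sub_one hy0.ne']
    exact log_le_sub_one_of_pos (div_pos (by linarith) hy0)
  linarith

lemma one_le_log_log {s : ℝ} (hs : exp (exp 1) ≤ s) : 1 ≤ log (log s) := by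
  have hs0 : 0 < s := (exp_pos _).trans_le hs
  have hlog_s : exp 1 ≤ log s := (le_log_iff_exp_le hs0).2 hs
  exact (le_log_iff_exp_le ((exp_pos 1).trans_le hlog_s)).2 hlog_s

lemma exp_exp_one_le_of_exp_four_le {s : ℝ} (hs : exp 4 ≤ s) : exp (exp 1) ≤ s :=
  (exp_le_exp.2 (by linarith [exp_one_lt_d9])).trans hs

lemma log_log_two_mul_sq_mul_log_log_le {s : ℝ} (hs : exp 4 ≤ s) :
    log (log (2 * s ^ 2 * log (log s))) ≤ 2 * log (log s) := by
  have hs0 : 0 < s := (exp_pos 4).trans_le hs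
  have hlog_s : 4 ≤ log s := (le_log_iff_exp_le hs0).2 hs
  have hL4 : log 4 ≤ log (log s) := log_le_log (by norm_num) hlog_s
  have hL1 : 1 ≤ log (log s) := one_le_log_log (exp_exp_one_le_of_exp_four_le hs)
  have hLs : log (log s) ≤ s := by
    linarith [log_le_sub_one_of_pos (show 0 < log s by linarith), log_le_sub_one_of_pos hs0]
  have hs2 : 2 ≤ s := by linarith [log_le_sub_one_of_pos hs0]
  have hx0 : 2 * s ^ 2 * log (log s) ≤ s ^ 4 := by
    nlinarith [mul_le_mul_of_nonneg_left hLs (by positivity : (0:ℝ) ≤ 2 * s ^ 2),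
      mul_le_mul_of_nonneg_left hs2 (by positivity : (0:ℝ) ≤ s ^ 3)]
  have hlog_x0 : log (2 * s ^ 2 * log (log s)) ≤ 4 * log s := by
    calc log (2 * s ^ 2 * log (log s)) ≤ log (s ^ 4) := log_le_log (by positivity) hx0
      _ = 4 * log s := by rw [log_pow]; norm_num
  calc log (log (2 * s ^ 2 * log (log s))) ≤ log (4 * log s) :=
        log_le_log (log_pos (by nlinarith)) hlog_x0
    _ = log 4 + log (log s) := log_mul (by norm_num) (by linarith)
    _ ≤ 2 * log (log s) := by linarith

lemma sq_mul_log_log_lt {s x : ℝ} (hs : exp 4 ≤ s) (hx : 2 * s ^ 2 * log (log s) < x) :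
    s ^ 2 * log (log x) < x := by
  set L := log (log s)
  set x₀ := 2 * s ^ 2 * L with hx₀_def
  have hs0 : 0 < s := (exp_pos 4).trans_le hs
  have hL1 : 1 ≤ L := one_le_log_log (exp_exp_one_le_of_exp_four_le hs)
  have hs1 : exp 1 ≤ s := (exp_le_exp.2 (by norm_num)).trans hs
  have hx₀ : exp 1 ≤ x₀ := by
    have : 1 ≤ s := by linarith [add_one_le_exp (1:ℝ)]
    nlinarith
  have hincr : s ^ 2 * ((x - x₀) / x₀) = (x - x₀) / (2 * L) := by
    rw [hx₀_def]; field_simp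
  calc s ^ 2 * log (log x) ≤ s ^ 2 * (2 * L + (x - x₀) / x₀) := by
        gcongr
        linarith [log_log_le_add_div hx₀ hx.le, log_log_two_mul_sq_mul_log_log_le hs]
    _ = x₀ + (x - x₀) / (2 * L) := by rw [mul_add, hincr]; ring
    _ < x₀ + (x - x₀) := by gcongr; exact div_lt_self (by linarith) (by linarith)
    _ = x := by ring

lemma sqrt_mul_lt_div {s x t : ℝ} (hs : 0 < s) (hx : 0 < x) (hst : s ^ 2 * t < x) :
    √(x * t) < x / s := by
  rw [sqrt_lt' (by positivity), div_pow, lt_div_iff₀ (by positivity)]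
  nlinarith [mul_lt_mul_of_pos_left hst hx]

theorem stmt1_general (a b c : ℝ) (ha : 0 < a) (hb : 0 < b)
    (hba : Real.exp (2 * Real.exp 1) ≤ b / a)
    (hcb : (c / b) ^ 2 < Real.exp (Real.exp 1)) :
    ∀ x : ℝ, 18 * b ^ 2 / a ^ 2 * Real.log (Real.log (3 * b / a)) < x →
      -a * x + 2 * b * phi x + c < 0 := by
  intro x hx
  set s := 3 * b / a with hs_def
  have hb_eq : b = a * s / 3 := by rw [hs_def]; field_simp
  replace hx : 2 * s ^ 2 * log (log s) < x := by
    convert hx using 2; rw [hs_def]; field_simp; ring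
  have hs : exp 4 ≤ s := by
    have : exp 4 ≤ exp (2 * exp 1) := exp_le_exp.2 (by linarith [add_one_le_exp (1:ℝ)])
    rw [hs_def, mul_div_assoc]
    linarith [(exp_pos 4).trans_le (this.trans hba)]
  have hs_ee : exp (exp 1) ≤ s := exp_exp_one_le_of_exp_four_le hs
  have hs1 : 1 ≤ s := le_trans (one_le_exp (exp_pos 1).le) hs_ee
  have hsx : s ^ 2 < x := by nlinarith [one_le_log_log hs_ee]
  have hx_ee : exp (exp 1) ≤ x := by nlinarith
  have hphi : 2 * b * phi x < 2 * a * x / 3 := by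
    have hsqrt :=
      sqrt_mul_lt_div (by linarith) ((sq_nonneg s).trans_lt hsx) (sq_mul_log_log_lt hs hx)
    rw [phi, if_pos hx_ee, hb_eq]
    calc 2 * (a * s / 3) * √(x * log (log x)) < 2 * (a * s / 3) * (x / s) := by gcongr
      _ = 2 * a * x / 3 := by field_simp
  have hc_lt : c < a * x / 3 := by
    have hcs : c / b < s := lt_of_pow_lt_pow_left₀ 2 (by linarith) (by nlinarith)
    rw [div_lt_iff₀ hb, hb_eq] at hcs
    nlinarith
  linarith

/-- if b/a ≥ e^(2e) and e^e > (c/b)², then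
U(x) = -a x + 2 b φ(x) + c < 0 for every x > (18 b²/a²) ln ln (3b/a). -/
theorem stmt1 (a b c : ℝ) (ha : 0 < a) (hb : 0 < b) (hc : 0 < c)
    (hba : Real.exp (2 * Real.exp 1) ≤ b / a)
    (hcb : (c / b) ^ 2 < Real.exp (Real.exp 1)) :
    ∀ x : ℝ, 18 * b ^ 2 / a ^ 2 * Real.log (Real.log (3 * b / a)) < x →
      -a * x + 2 * b * phi x + c < 0 :=
  stmt1_general a b c ha hb hba hcb
end

section
/- Let α ≥ e^(2e) and suppose x_max ≥ e^e satisfies x_max / (2·ln(ln x_max)) = α². Then x_max ≤ 4α²·ln(ln α). -/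
open Real

/-- if α ≥ e^(2e), x_max ≥ e^e and x_max / (2 ln ln x_max) = α², then
x_max ≤ 4 α² ln ln α. -/
theorem stmt4 (α xmax : ℝ) (hα : Real.exp (2 * Real.exp 1) ≤ α)
    (hx : Real.exp (Real.exp 1) ≤ xmax)
    (heq : xmax / (2 * Real.log (Real.log xmax)) = α ^ 2) :
    xmax ≤ 4 * α ^ 2 * Real.log (Real.log α) := by
  have he : (2.7182818283:ℝ) < Real.exp 1 := Real.exp_one_gt_d9
  have hα0 : (0:ℝ) < α := lt_of_lt_of_le (Real.exp_pos _) hα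
  have hx0 : (0:ℝ) < xmax := lt_of_lt_of_le (Real.exp_pos _) hx
  have hL : 2 * Real.exp 1 ≤ Real.log α := (Real.le_log_iff_exp_le hα0).mpr hα
  have hlx : Real.exp 1 ≤ Real.log xmax := (Real.le_log_iff_exp_le hx0).mpr hx
  have hlx1 : (1:ℝ) < Real.log xmax := by nlinarith
  have hlx0 : (0:ℝ) < Real.log xmax := by linarith
  have hllx : (0:ℝ) < Real.log (Real.log xmax) := Real.log_pos hlx1
  have hxm : xmax = 2 * α ^ 2 * Real.log (Real.log xmax) := by
    field_simp at heq
    linarith [heq]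
  have h1 : Real.log (Real.log xmax) < Real.log xmax := by
    have := Real.log_le_sub_one_of_pos hlx0
    linarith
  have hsq : Real.sqrt xmax * Real.sqrt xmax = xmax := Real.mul_self_sqrt hx0.le
  have hsp : (0:ℝ) < Real.sqrt xmax := Real.sqrt_pos.mpr hx0
  have hs : Real.log xmax ≤ 2 * Real.sqrt xmax := by
    have h2 := Real.log_le_sub_one_of_pos hsp
    have h3 : Real.log (Real.sqrt xmax) = Real.log xmax / 2 := Real.log_sqrt hx0.le
    linarith
  have hα2 : (0:ℝ) < α ^ 2 := by positivity
  have hb : Real.sqrt xmax ≤ 4 * α ^ 2 := by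
    have : Real.sqrt xmax * Real.sqrt xmax ≤ 4 * α ^ 2 * Real.sqrt xmax := by
      nlinarith
    nlinarith
  have hbound : xmax ≤ 16 * α ^ 4 := by nlinarith
  have hln : Real.log xmax ≤ Real.log 16 + 4 * Real.log α := by
    have h4 : Real.log xmax ≤ Real.log (16 * α ^ 4) := Real.log_le_log hx0 hbound
    rw [Real.log_mul (by norm_num) (by positivity), Real.log_pow] at h4
    push_cast at h4
    linarith
  have hlog2 : Real.log 2 < 0.6931471808 := Real.log_two_lt_d9
  have hlog16 : Real.log 16 < 2.78 := by
    have : (16:ℝ) = 2 ^ 4 := by norm_num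
    rw [this, Real.log_pow]
    push_cast
    linarith
  have hL2 : Real.log xmax ≤ (Real.log α) ^ 2 := by nlinarith
  have hfin : Real.log (Real.log xmax) ≤ 2 * Real.log (Real.log α) := by
    have h5 : Real.log (Real.log xmax) ≤ Real.log ((Real.log α) ^ 2) :=
      Real.log_le_log hlx0 hL2
    rwa [Real.log_pow, Nat.cast_ofNat] at h5
  nlinarith
end

section
/- Consider a tandem of J FIFO servers with n jobs where the deterministic interarrival and service times satisfy, for all 1 ≤ k ≤ n: Γ_min(k) ≤ Σ_{i=k}^{n} U_i ≤ Γ_max(k) and Γ^j_min(k) ≤ Σ_{i=k}^{n} V_i^j ≤ Γ^j_max(k) for each server j. Then the sojourn time of job n satisfies W_n ≤ max over chains 1 ≤ k_1 ≤ ... ≤ k_J ≤ n of [ Σ_{j=1}^{J-1} (Γ^j_max(k_j) − Γ^j_min(k_{j+1}+1)) + Γ^J_max(k_J) − Γ_min(k_1+1) ]. -/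
open Finset

/- The sojourn time is attained by some chain `k₁ ≤ ⋯ ≤ k_J`. Each partial sum
`∑_{i=k_j}^{k_{j+1}} V_i^j` is the difference of the tails starting at `k_j` and at `k_{j+1}+1`,
hence at most `Γ^j_max(k_j) - Γ^j_min(k_{j+1}+1)`; the last service sum and the arrival sum are
tails themselves, so the bound holds term by term at that same chain. -/

lemma le_of_forall_le_succ_Icc {k : ℕ → ℕ} {J : ℕ}
    (hk : ∀ j, 1 ≤ j → j ≤ J - 1 → k j ≤ k (j + 1)) {i m : ℕ} (hi : 1 ≤ i) (him : i ≤ m)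
    (hmJ : m ≤ J) : k i ≤ k m := by
  induction m, him using Nat.le_induction with
  | base => exact le_rfl
  | succ m hm ih => exact (ih (by omega)).trans (hk m (by omega) (by omega))

lemma sum_Icc_eq_sub_sum_Icc_succ (f : ℕ → ℝ) {a b n : ℕ} (hab : a ≤ b) (hbn : b ≤ n) :
    ∑ i ∈ Icc a b, f i = ∑ i ∈ Icc a n, f i - ∑ i ∈ Icc (b + 1) n, f i := by
  simp only [← Ico_add_one_right_eq_Icc]
  rw [← sum_Ico_consecutive f (by omega : a ≤ b + 1) (by omega : b + 1 ≤ n + 1)]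
  ring

section TailBounds

variable {f lo hi : ℕ → ℝ} {n : ℕ}

lemma le_sum_Icc_succ (hlo : ∀ k, 1 ≤ k → k ≤ n → lo k ≤ ∑ i ∈ Icc k n, f i)
    (hlo_succ : lo (n + 1) = 0) {b : ℕ} (hbn : b ≤ n) :
    lo (b + 1) ≤ ∑ i ∈ Icc (b + 1) n, f i := by
  rcases hbn.lt_or_eq with hb | rfl
  · exact hlo (b + 1) (by omega) hb
  · simp [hlo_succ]

lemma sum_Icc_le_sub (hlo : ∀ k, 1 ≤ k → k ≤ n → lo k ≤ ∑ i ∈ Icc k n, f i)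
    (hhi : ∀ k, 1 ≤ k → k ≤ n → ∑ i ∈ Icc k n, f i ≤ hi k) (hlo_succ : lo (n + 1) = 0)
    {a b : ℕ} (ha : 1 ≤ a) (hab : a ≤ b) (hbn : b ≤ n) :
    ∑ i ∈ Icc a b, f i ≤ hi a - lo (b + 1) := by
  rw [sum_Icc_eq_sub_sum_Icc_succ f hab hbn]
  exact sub_le_sub (hhi a ha (hab.trans hbn)) (le_sum_Icc_succ hlo hlo_succ hbn)

end TailBounds

theorem stmt9_general (J n : ℕ) (hJ : 1 ≤ J)
    (U : ℕ → ℝ) (V : ℕ → ℕ → ℝ)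
    (Γmin Γmax : ℕ → ℝ) (Γjmin Γjmax : ℕ → ℕ → ℝ)
    (hGam : ∀ k, 1 ≤ k → k ≤ n →
      Γmin k ≤ ∑ i ∈ Finset.Icc k n, U i ∧ (∑ i ∈ Finset.Icc k n, U i) ≤ Γmax k)
    (hGamj : ∀ j k, 1 ≤ j → j ≤ J → 1 ≤ k → k ≤ n →
      Γjmin j k ≤ ∑ i ∈ Finset.Icc k n, V i j ∧ (∑ i ∈ Finset.Icc k n, V i j) ≤ Γjmax j k)
    (hconv : ∀ j, Γjmin j (n + 1) = 0) (hconv' : Γmin (n + 1) = 0)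
    (W : ℝ)
    (hW : IsGreatest
      { y : ℝ | ∃ k : ℕ → ℕ, 1 ≤ k 1 ∧ (∀ j, 1 ≤ j → j ≤ J - 1 → k j ≤ k (j + 1)) ∧ k J ≤ n ∧
        y = (∑ j ∈ Finset.Icc 1 (J - 1), ∑ i ∈ Finset.Icc (k j) (k (j + 1)), V i j)
            + (∑ i ∈ Finset.Icc (k J) n, V i J)
            - ∑ i ∈ Finset.Icc (k 1 + 1) n, U i } W) :
    ∃ k : ℕ → ℕ, 1 ≤ k 1 ∧ (∀ j, 1 ≤ j → j ≤ J - 1 → k j ≤ k (j + 1)) ∧ k J ≤ n ∧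
      W ≤ (∑ j ∈ Finset.Icc 1 (J - 1), (Γjmax j (k j) - Γjmin j (k (j + 1) + 1)))
            + Γjmax J (k J) - Γmin (k 1 + 1) := by
  obtain ⟨k, hk1, hk, hkJ, rfl⟩ := hW.1
  have hk_le_n : ∀ j, 1 ≤ j → j ≤ J → k j ≤ n := fun j hj hjJ =>
    (le_of_forall_le_succ_Icc hk hj hjJ le_rfl).trans hkJ
  have one_le_hk : ∀ j, 1 ≤ j → j ≤ J → 1 ≤ k j := fun j hj hjJ =>
    hk1.trans (le_of_forall_le_succ_Icc hk le_rfl hj hjJ)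
  refine ⟨k, hk1, hk, hkJ, sub_le_sub (add_le_add (sum_le_sum fun j hj => ?_) ?_) ?_⟩
  · obtain ⟨hj1, hjJ⟩ := mem_Icc.mp hj
    exact sum_Icc_le_sub (fun k h1 h2 => (hGamj j k hj1 (by omega) h1 h2).1)
      (fun k h1 h2 => (hGamj j k hj1 (by omega) h1 h2).2) (hconv j)
      (one_le_hk j hj1 (by omega)) (hk j hj1 hjJ) (hk_le_n (j + 1) (by omega) (by omega))
  · exact (hGamj J (k J) hJ le_rfl (one_le_hk J hJ le_rfl) hkJ).2
  · exact le_sum_Icc_succ (fun k h1 h2 => (hGam k h1 h2).1) hconv' (hk_le_n 1 le_rfl hJ)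

/-- robust bound on the sojourn time in a tandem of J FIFO servers.  `W` is the
sojourn time of job `n`, characterized as the greatest value of the max-plus representation.
Under the tail-sum bounds `Γmin/Γmax` (arrivals) and `Γjmin/Γjmax` (services), with the
convention that the lower bounds vanish at index `n+1`,
W ≤ max over chains 1 ≤ k₁ ≤ ⋯ ≤ k_J ≤ n of
  ∑_{j=1}^{J-1} (Γjmax j (k_j) - Γjmin j (k_{j+1}+1)) + Γjmax J (k_J) - Γmin (k₁+1). -/
theorem stmt9 (J n : ℕ) (hJ : 1 ≤ J) (hn : 1 ≤ n)
    (U : ℕ → ℝ) (V : ℕ → ℕ → ℝ) (hU : ∀ i, 0 ≤ U i) (hV : ∀ i j, 0 ≤ V i j)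
    (Γmin Γmax : ℕ → ℝ) (Γjmin Γjmax : ℕ → ℕ → ℝ)
    (hGam : ∀ k, 1 ≤ k → k ≤ n →
      Γmin k ≤ ∑ i ∈ Finset.Icc k n, U i ∧ (∑ i ∈ Finset.Icc k n, U i) ≤ Γmax k)
    (hGamj : ∀ j k, 1 ≤ j → j ≤ J → 1 ≤ k → k ≤ n →
      Γjmin j k ≤ ∑ i ∈ Finset.Icc k n, V i j ∧ (∑ i ∈ Finset.Icc k n, V i j) ≤ Γjmax j k)
    (hconv : ∀ j, Γjmin j (n + 1) = 0) (hconv' : Γmin (n + 1) = 0)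
    (W : ℝ)
    (hW : IsGreatest
      { y : ℝ | ∃ k : ℕ → ℕ, 1 ≤ k 1 ∧ (∀ j, 1 ≤ j → j ≤ J - 1 → k j ≤ k (j + 1)) ∧ k J ≤ n ∧
        y = (∑ j ∈ Finset.Icc 1 (J - 1), ∑ i ∈ Finset.Icc (k j) (k (j + 1)), V i j)
            + (∑ i ∈ Finset.Icc (k J) n, V i J)
            - ∑ i ∈ Finset.Icc (k 1 + 1) n, U i } W) :
    ∃ k : ℕ → ℕ, 1 ≤ k 1 ∧ (∀ j, 1 ≤ j → j ≤ J - 1 → k j ≤ k (j + 1)) ∧ k J ≤ n ∧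
      W ≤ (∑ j ∈ Finset.Icc 1 (J - 1), (Γjmax j (k j) - Γjmin j (k (j + 1) + 1)))
            + Γjmax J (k J) - Γmin (k 1 + 1) :=
  stmt9_general J n hJ U V Γmin Γmax Γjmin Γjmax hGam hGamj hconv hconv' W hW
end

section
/- Let λ > 0, Γ > 0, ρ* ∈ (0,1), J ≥ 1, with μ_min ≥ λ/ρ* (so that λ^{-1} − μ_min^{-1} ≥ (1−ρ*)/λ > 0), and suppose λΓ ≥ e^(2e). Define φ(x) = √(x·ln(ln x)) for x ≥ e^e and φ(x) = 1 otherwise. Then max over real x ≥ 1 of [ x·(μ_min^{-1} − λ^{-1}) + 2JΓ·φ(x) + J/λ ] is at most (7J²Γ²λ/(1−ρ*))·ln(ln(JλΓ/(1−ρ*))) + J/λ. -/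
/-!
With `a = (1 - ρ)/λ` and `r = JλΓ/(1 - ρ)` we have `μ_min⁻¹ - λ⁻¹ ≤ -a` and `JΓ = a r`, so after
dividing by `a` it suffices that `2 r φ(x) ≤ x + 7 r² ln ln r`. For `x ≤ r⁷` this is AM–GM,
`2 r √(x ln ln x) ≤ x + r² ln ln x`, combined with `ln ln x ≤ ln 7 + ln ln r ≤ 7 ln ln r`.
For `x > r⁷` already `4 r² ln ln x ≤ x`, so that `2 r φ(x) ≤ x`.
-/

open Real

lemma phi_of_lt {x : ℝ} (hx : x < exp (exp 1)) : phi x = 1 := if_neg hx.not_ge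

lemma phi_of_le {x : ℝ} (hx : exp (exp 1) ≤ x) : phi x = √(x * log (log x)) := if_pos hx

lemma three_le_exp_exp_one : (3 : ℝ) ≤ exp (exp 1) := by
  linarith [add_one_le_exp (exp 1), exp_one_gt_d9]

lemma one_le_log_log_of_exp_exp_one_le {x : ℝ} (hx : exp (exp 1) ≤ x) : 1 ≤ log (log x) := by
  have hlog : exp 1 ≤ log x := (le_log_iff_exp_le ((exp_pos _).trans_le hx)).2 hx
  exact (le_log_iff_exp_le ((exp_pos 1).trans_le hlog)).2 hlog

lemma two_mul_mul_sqrt_mul_le (r : ℝ) {x L : ℝ} (hx : 0 ≤ x) (hL : 0 ≤ L) :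
    2 * r * √(x * L) ≤ x + r ^ 2 * L :=
  calc 2 * r * √(x * L) = 2 * √x * (r * √L) := by rw [sqrt_mul hx]; ring
    _ ≤ √x ^ 2 + (r * √L) ^ 2 := two_mul_le_add_sq _ _
    _ = x + r ^ 2 * L := by rw [mul_pow, sq_sqrt hx, sq_sqrt hL]

lemma log_log_le_log_add_log_log_of_le_pow {x r : ℝ} {n : ℕ} (hx : 1 < x) (hr : 1 < r)
    (hn : n ≠ 0) (h : x ≤ r ^ n) : log (log x) ≤ log n + log (log r) := by
  have hlog : log x ≤ n * log r := by
    simpa only [log_pow] using log_le_log (by linarith) h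
  rw [← log_mul (by exact_mod_cast hn) (log_pos hr).ne']
  exact log_le_log (log_pos hx) hlog

lemma four_mul_sq_mul_log_le_of_pow_seven_le {r x : ℝ} (hr : 3 ≤ r) (hx : r ^ 7 ≤ x) :
    4 * r ^ 2 * log x ≤ x := by
  have hr0 : 0 < r := by linarith
  have hr7 : 0 < r ^ 7 := by positivity
  have hx0 : 0 < x := hr7.trans_le hx
  have hlog : log x ≤ x / r ^ 7 + 7 * r := by
    have hsplit : log x = log (x / r ^ 7) + 7 * log r := by
      rw [log_div hx0.ne' hr7.ne', log_pow]; push_cast; ring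
    rw [hsplit]
    gcongr
    · exact log_le_self (by positivity)
    · exact log_le_self hr0.le
  have hr4 : 81 ≤ r ^ 4 := by nlinarith [pow_le_pow_left₀ (by norm_num) hr 4]
  calc 4 * r ^ 2 * log x ≤ 4 * r ^ 2 * (x / r ^ 7 + 7 * r) := by gcongr
    _ = 4 / r ^ 5 * x + 28 * r ^ 3 := by field_simp; ring
    _ ≤ 1 / 2 * x + x / 2 := by
        have hr5 : 4 / r ^ 5 ≤ 1 / 2 := by
          rw [div_le_iff₀ (by positivity)]; nlinarith
        gcongr ?_ * x + ?_
        nlinarith [pow_pos hr0 3]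
    _ = x := by ring

theorem two_mul_mul_phi_le {r x : ℝ} (hr : exp (exp 1) ≤ r) (hx : 1 ≤ x) :
    2 * r * phi x ≤ x + 7 * r ^ 2 * log (log r) := by
  have hr3 : 3 ≤ r := three_le_exp_exp_one.trans hr
  have hLr : 1 ≤ log (log r) := one_le_log_log_of_exp_exp_one_le hr
  rcases lt_or_ge x (exp (exp 1)) with hsmall | hbig
  · rw [phi_of_lt hsmall]
    nlinarith
  rw [phi_of_le hbig]
  have hx3 : 3 ≤ x := three_le_exp_exp_one.trans hbig
  have hL : 0 ≤ log (log x) := zero_le_one.trans (one_le_log_log_of_exp_exp_one_le hbig)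
  rcases le_or_gt x (r ^ 7) with hmid | hlarge
  · have h7 := log_log_le_log_add_log_log_of_le_pow (by linarith) (by linarith) (by norm_num) hmid
    have hlog7 : log 7 ≤ 6 := by linarith [log_le_sub_one_of_pos (show (0 : ℝ) < 7 by norm_num)]
    calc 2 * r * √(x * log (log x)) ≤ x + r ^ 2 * log (log x) :=
          two_mul_mul_sqrt_mul_le r (by linarith) hL
      _ ≤ x + r ^ 2 * (7 * log (log r)) := by
          gcongr
          push_cast at h7
          linarith
      _ = x + 7 * r ^ 2 * log (log r) := by ring
  · have h4 : 4 * r ^ 2 * log (log x) ≤ x :=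
      (mul_le_mul_of_nonneg_left (log_le_self (log_nonneg hx)) (by positivity)).trans
        (four_mul_sq_mul_log_le_of_pow_seven_le hr3 hlarge.le)
    have hsq : 2 * r * √(x * log (log x)) ≤ x := by
      rw [← pow_le_pow_iff_left₀ (by positivity) (by linarith) two_ne_zero, mul_pow,
        sq_sqrt (by positivity)]
      nlinarith
    linarith [show 0 ≤ 7 * r ^ 2 * log (log r) by positivity]

lemma inv_sub_inv_le_neg_one_sub_div {lam ρ μ : ℝ} (hlam : 0 < lam) (hρ : 0 < ρ)
    (hμ : lam / ρ ≤ μ) : μ⁻¹ - lam⁻¹ ≤ -((1 - ρ) / lam) := by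
  have hμ' : μ⁻¹ ≤ ρ / lam := by simpa only [inv_div] using inv_anti₀ (by positivity) hμ
  have hsplit : -((1 - ρ) / lam) = ρ / lam - lam⁻¹ := by field_simp; ring
  linarith

theorem stmt10_general (lam Γ ρ μmin : ℝ) (J : ℕ) (hJ : 1 ≤ J)
    (hlam : 0 < lam) (hρ0 : 0 < ρ) (hρ1 : ρ < 1)
    (hμ : lam / ρ ≤ μmin)
    (hlamΓ : Real.exp (2 * Real.exp 1) ≤ lam * Γ) :
    ∀ x : ℝ, 1 ≤ x →
      x * (μmin⁻¹ - lam⁻¹) + 2 * J * Γ * phi x + J / lam ≤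
        7 * J ^ 2 * Γ ^ 2 * lam / (1 - ρ) * Real.log (Real.log (J * lam * Γ / (1 - ρ)))
          + J / lam := by
  intro x hx
  have hρ' : 0 < 1 - ρ := sub_pos.2 hρ1
  set a := (1 - ρ) / lam
  set r := J * lam * Γ / (1 - ρ)
  have hr : exp (exp 1) ≤ r := by
    have hJ' : (1 : ℝ) ≤ J := by exact_mod_cast hJ
    calc exp (exp 1) ≤ lam * Γ := le_trans (exp_le_exp.2 (by linarith [exp_pos 1])) hlamΓ
      _ ≤ r := by
          rw [le_div_iff₀ hρ']
          nlinarith [(exp_pos _).trans_le hlamΓ]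
  have hJΓ : (J : ℝ) * Γ = a * r := by simp only [a, r]; field_simp
  have hcoef : 7 * (J : ℝ) ^ 2 * Γ ^ 2 * lam / (1 - ρ) = a * (7 * r ^ 2) := by
    simp only [a, r]; field_simp
  have hgap := mul_le_mul_of_nonneg_left (inv_sub_inv_le_neg_one_sub_div hlam hρ0 hμ)
    (zero_le_one.trans hx)
  have hbound := mul_le_mul_of_nonneg_left (two_mul_mul_phi_le hr hx) (by positivity : 0 ≤ a)
  calc x * (μmin⁻¹ - lam⁻¹) + 2 * J * Γ * phi x + J / lam
      ≤ x * -a + a * (2 * r * phi x) + J / lam := by rw [mul_assoc 2, hJΓ]; linarith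
    _ ≤ _ := by rw [hcoef]; linarith

/-- optimization step for the tandem sojourn-time bound: for all x ≥ 1,
x (μ_min⁻¹ - λ⁻¹) + 2 J Γ φ(x) + J/λ ≤ (7 J² Γ² λ/(1-ρ*)) ln ln (J λ Γ/(1-ρ*)) + J/λ. -/
theorem stmt10 (lam Γ ρ μmin : ℝ) (J : ℕ) (hJ : 1 ≤ J)
    (hlam : 0 < lam) (hΓ : 0 < Γ) (hρ0 : 0 < ρ) (hρ1 : ρ < 1)
    (hμ : lam / ρ ≤ μmin)
    (hlamΓ : Real.exp (2 * Real.exp 1) ≤ lam * Γ) :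
    ∀ x : ℝ, 1 ≤ x →
      x * (μmin⁻¹ - lam⁻¹) + 2 * J * Γ * phi x + J / lam ≤
        7 * J ^ 2 * Γ ^ 2 * lam / (1 - ρ) * Real.log (Real.log (J * lam * Γ / (1 - ρ)))
          + J / lam :=
  stmt10_general lam Γ ρ μmin J hJ hlam hρ0 hρ1 hμ hlamΓ
end

section
/- Let λ > 0, Γ > 0 with λΓ ≥ e^(2e), and let t satisfy tλ ≥ e^e and tλ ≥ 1 + 3λ²Γ². Set b = tλ + 3λ²Γ²·√(tλ·ln(ln(tλ))). Then (b − tλ)/√(b·ln(ln b)) ≥ λΓ. -/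
set_option maxHeartbeats 800000

open Real

/-- key computation of Lemma 5.1: with λΓ ≥ e^(2e), tλ ≥ e^e and
tλ ≥ 1 + 3λ²Γ², for b = tλ + 3λ²Γ²√(tλ ln ln (tλ)) one has
(b - tλ)/√(b ln ln b) ≥ λΓ. -/
theorem stmt13 (lam Γ t : ℝ) (hlam : 0 < lam) (hΓ : 0 < Γ)
    (hlamΓ : Real.exp (2 * Real.exp 1) ≤ lam * Γ)
    (ht1 : Real.exp (Real.exp 1) ≤ t * lam)
    (ht2 : 1 + 3 * lam ^ 2 * Γ ^ 2 ≤ t * lam) :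
    lam * Γ ≤
      ((t * lam + 3 * lam ^ 2 * Γ ^ 2 * Real.sqrt (t * lam * Real.log (Real.log (t * lam))))
          - t * lam) /
        Real.sqrt ((t * lam + 3 * lam ^ 2 * Γ ^ 2 *
            Real.sqrt (t * lam * Real.log (Real.log (t * lam)))) *
          Real.log (Real.log (t * lam + 3 * lam ^ 2 * Γ ^ 2 *
            Real.sqrt (t * lam * Real.log (Real.log (t * lam)))))) := by
  set s := t * lam with hsdef
  set L := lam * Γ with hLdef
  set M := lam ^ 2 * Γ ^ 2 with hMdef
  have hM : L ^ 2 = M := by rw [hLdef, hMdef]; ring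
  have he1 : (1:ℝ) ≤ Real.exp 1 := Real.one_le_exp zero_le_one
  have hL1 : (1:ℝ) ≤ L :=
    le_trans (Real.one_le_exp (by positivity)) hlamΓ
  have hM1 : (1:ℝ) ≤ M := by nlinarith
  have hs_pos : (0:ℝ) < s := lt_of_lt_of_le (Real.exp_pos _) ht1
  have hee : Real.exp 1 ≤ Real.log s := by
    calc Real.exp 1 = Real.log (Real.exp (Real.exp 1)) := (Real.log_exp _).symm
    _ ≤ Real.log s := Real.log_le_log (Real.exp_pos _) ht1
  have hlnln : (1:ℝ) ≤ Real.log (Real.log s) := by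
    calc (1:ℝ) = Real.log (Real.exp 1) := (Real.log_exp _).symm
    _ ≤ Real.log (Real.log s) := Real.log_le_log (Real.exp_pos _) hee
  set A := Real.sqrt (s * Real.log (Real.log s)) with hA
  have hA0 : (0:ℝ) ≤ A := Real.sqrt_nonneg _
  have hA2 : A ^ 2 = s * Real.log (Real.log s) := by
    rw [hA, Real.sq_sqrt]; positivity
  have hAle : A ≤ s := by
    rw [hA]
    have h1 : Real.log (Real.log s) ≤ s := by
      calc Real.log (Real.log s) ≤ Real.log s := Real.log_le_self (by linarith)
      _ ≤ s := Real.log_le_self hs_pos.le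
    calc Real.sqrt (s * Real.log (Real.log s)) ≤ Real.sqrt (s * s) := by
          apply Real.sqrt_le_sqrt; nlinarith
    _ = s := Real.sqrt_mul_self hs_pos.le
  set b := s + 3 * M * A with hb
  have hbs : s ≤ b := by nlinarith
  have hb_pos : (0:ℝ) < b := lt_of_lt_of_le hs_pos hbs
  have hb2 : b ≤ s ^ 2 := by nlinarith
  have hlnbs : Real.log s ≤ Real.log b := Real.log_le_log hs_pos hbs
  have hlnlnb1 : (1:ℝ) ≤ Real.log (Real.log b) := by
    calc (1:ℝ) = Real.log (Real.exp 1) := (Real.log_exp _).symm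
    _ ≤ Real.log (Real.log b) := Real.log_le_log (Real.exp_pos _) (le_trans hee hlnbs)
  have hlog2 : Real.log 2 ≤ 1 := by
    have := Real.log_le_sub_one_of_pos (x := 2) (by norm_num); linarith
  have hlnb : Real.log (Real.log b) ≤ 2 * Real.log (Real.log s) := by
    have h1 : Real.log b ≤ 2 * Real.log s := by
      calc Real.log b ≤ Real.log (s ^ 2) := Real.log_le_log hb_pos hb2
      _ = 2 * Real.log s := by rw [Real.log_pow]; norm_num
    calc Real.log (Real.log b) ≤ Real.log (2 * Real.log s) :=
          Real.log_le_log (by linarith) h1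
    _ = Real.log 2 + Real.log (Real.log s) := Real.log_mul (by norm_num) (by linarith)
    _ ≤ 2 * Real.log (Real.log s) := by linarith
  have key : b * Real.log (Real.log b) ≤ 9 * M * (s * Real.log (Real.log s)) := by
    have h1 : b ≤ s * (1 + 3 * M) := by nlinarith
    have h2 : b * Real.log (Real.log b) ≤ (s * (1 + 3 * M)) * (2 * Real.log (Real.log s)) :=
      mul_le_mul h1 hlnb (by linarith) (by nlinarith)
    have h3 : (s * (1 + 3 * M)) * (2 * Real.log (Real.log s))
        = (2 + 6 * M) * (s * Real.log (Real.log s)) := by ring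
    have h4 : (2 + 6 * M) * (s * Real.log (Real.log s))
        ≤ (9 * M) * (s * Real.log (Real.log s)) :=
      mul_le_mul_of_nonneg_right (by linarith) (by nlinarith)
    calc b * Real.log (Real.log b) ≤ (2 + 6 * M) * (s * Real.log (Real.log s)) := by
          rw [← h3]; exact h2
    _ ≤ 9 * M * (s * Real.log (Real.log s)) := h4
  have hX_pos : (0:ℝ) < b * Real.log (Real.log b) := by positivity
  have hbfold : s + 3 * lam ^ 2 * Γ ^ 2 * A = b := by rw [hb]; ring
  rw [hbfold, le_div_iff₀ (Real.sqrt_pos.mpr hX_pos)]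
  have hgoal : b - s = 3 * M * A := by rw [hb]; ring
  rw [hgoal]
  have hsq : (L * Real.sqrt (b * Real.log (Real.log b))) ^ 2 ≤ (3 * M * A) ^ 2 := by
    rw [mul_pow, Real.sq_sqrt hX_pos.le]
    calc L ^ 2 * (b * Real.log (Real.log b)) ≤ M * (9 * M * (s * Real.log (Real.log s))) := by
          rw [hM]; exact mul_le_mul_of_nonneg_left key (by linarith)
    _ = (3 * M) ^ 2 * A ^ 2 := by rw [hA2]; ring
    _ = (3 * M * A) ^ 2 := by ring
  have hl0 : (0:ℝ) ≤ L * Real.sqrt (b * Real.log (Real.log b)) := by positivity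
  have hr0 : (0:ℝ) ≤ 3 * M * A := by positivity
  nlinarith [hsq, hl0, hr0]
end

section
/- In a single-server multiclass robust queueing system with J classes, suppose that during the busy period starting at time 0, the workload at time t satisfies W(t) ≤ t(ρ−1) + (4J+3)·λ̄_max·Γ²·φ(λ̄_max·t) for all t satisfying t ≥ max_j(e^e/λ_j, 1/λ_j + 3λ_max²Γ²/λ_j), where ρ < 1, λ̄_max > 0, Γ > 0 with λ̄_max·Γ ≥ min_j λ_j·Γ ≥ e^(2e), and φ(x) = √(x·ln(ln x)) for x ≥ e^e, φ(x)=1 otherwise. Then the busy period length B (the first time the right-hand side becomes negative, since W(t) ≥ 0 during the busy period) satisfies B ≤ (5(4J+3)²·λ̄_max³·Γ⁴/(1−ρ)²)·ln(ln(2(4J+3)·λ̄_max²·Γ²/(1−ρ))). -/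
/-!
Put `K = (4J+3) λ̄² Γ² / (1-ρ)` and let `T` be the claimed bound, so that `λ̄ T = 5 K² L` with
`L = ln ln (2K)`. Since `ln (λ̄ T) ≤ 5 ln (2K) < (ln (2K))⁵`, we get `ln ln (λ̄ T) < 5 L = λ̄ T / K²`,
i.e. `K φ(λ̄ T) < λ̄ T`, which says exactly that the workload bound is negative at `T`.
As `T` also lies beyond every class threshold and the workload is nonnegative on `[0, B]`,
`B < T` is impossible.
-/

open Real

lemma mul_phi_lt_self_of_log_log_lt {x K : ℝ} (hx : exp (exp 1) ≤ x) (hK : 0 < K)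
    (hlog : log (log x) < x / K ^ 2) : K * phi x < x := by
  have hx0 : 0 < x := (exp_pos _).trans_le hx
  have hloglog : 0 ≤ log (log x) := by
    have : exp 1 ≤ log x := (le_log_iff_exp_le hx0).2 hx
    exact log_nonneg (by linarith [add_one_le_exp (1 : ℝ)])
  rw [phi, if_pos hx, ← abs_of_pos hK, ← sqrt_sq_eq_abs, ← sqrt_mul (sq_nonneg K)]
  calc √(K ^ 2 * (x * log (log x))) < √(x ^ 2) := by
        apply sqrt_lt_sqrt (by positivity)
        calc K ^ 2 * (x * log (log x)) < K ^ 2 * (x * (x / K ^ 2)) := by gcongr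
          _ = x ^ 2 := by field_simp
    _ = x := sqrt_sq hx0.le

lemma one_le_log_log_two_mul {K : ℝ} (hK : exp (exp 1) ≤ K) : 1 ≤ log (log (2 * K)) := by
  have hK0 : 0 < K := (exp_pos _).trans_le hK
  have hu : exp 1 ≤ log (2 * K) := (le_log_iff_exp_le (by positivity)).2 (by linarith)
  exact (le_log_iff_exp_le ((exp_pos 1).trans_le hu)).2 hu

lemma log_log_five_mul_sq_mul_lt {K : ℝ} (hK : exp (exp 1) ≤ K) :
    log (log (5 * K ^ 2 * log (log (2 * K)))) < 5 * log (log (2 * K)) := by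
  set u := log (2 * K)
  have hK1 : 1 ≤ K := le_trans (one_le_exp (exp_pos 1).le) hK
  have hu : exp 1 ≤ u := (le_log_iff_exp_le (by positivity)).2 (by linarith)
  have hu2 : 2 ≤ u := by linarith [add_one_le_exp (1 : ℝ)]
  have hL : 1 ≤ log u := one_le_log_log_two_mul hK
  have hlogx : log (5 * K ^ 2 * log u) < u ^ 5 := by
    have hLu : log u ≤ u := (log_le_sub_one_of_pos (by positivity)).trans (by linarith)
    have hu2K : u ≤ 2 * K := (log_le_sub_one_of_pos (by positivity)).trans (by linarith)
    calc log (5 * K ^ 2 * log u) ≤ log ((2 * K) ^ 5) := by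
          apply log_le_log (by positivity)
          nlinarith [pow_le_pow_right₀ hK1 (show 3 ≤ 5 by norm_num)]
      _ = 5 * u := by rw [log_pow]; norm_num [u]
      _ < u ^ 5 := by nlinarith [sq_nonneg u, sq_nonneg (u - 2), pow_pos (by positivity : 0 < u) 3]
  calc log (log (5 * K ^ 2 * log u)) < log (u ^ 5) := log_lt_log (log_pos (by nlinarith)) hlogx
    _ = 5 * log u := by rw [log_pow]; norm_num

lemma mul_phi_lt_self {K : ℝ} (hK : exp (exp 1) ≤ K) :
    K * phi (5 * K ^ 2 * log (log (2 * K))) < 5 * K ^ 2 * log (log (2 * K)) := by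
  have hK1 : 1 ≤ K := le_trans (one_le_exp (exp_pos 1).le) hK
  have hL := one_le_log_log_two_mul hK
  apply mul_phi_lt_self_of_log_log_lt (by nlinarith) (by positivity)
  convert log_log_five_mul_sq_mul_lt hK using 1
  field_simp

lemma neg_mul_add_mul_phi_neg {a b : ℝ} (ha : 0 < a) (hba : exp (exp 1) ≤ b / a) :
    -a * (5 * (b / a) ^ 2 * log (log (2 * (b / a))))
      + b * phi (5 * (b / a) ^ 2 * log (log (2 * (b / a)))) < 0 := by
  have := mul_lt_mul_of_pos_left (mul_phi_lt_self hba) ha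
  rw [← mul_assoc, mul_div_cancel₀ _ ha.ne'] at this
  linarith

lemma mul_sub_one_add_mul_phi_neg {c l Γ ρ T : ℝ} (hl : 0 < l) (hρ : ρ < 1)
    (hK : exp (exp 1) ≤ c * l ^ 2 * Γ ^ 2 / (1 - ρ))
    (hT : l * T = 5 * (c * l ^ 2 * Γ ^ 2 / (1 - ρ)) ^ 2
      * log (log (2 * (c * l ^ 2 * Γ ^ 2 / (1 - ρ))))) :
    T * (ρ - 1) + c * l * Γ ^ 2 * phi (l * T) < 0 := by
  have hneg := neg_mul_add_mul_phi_neg (sub_pos.2 hρ) hK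
  rw [← hT] at hneg
  have hscale : T * (ρ - 1) + c * l * Γ ^ 2 * phi (l * T)
      = (-(1 - ρ) * (l * T) + c * l ^ 2 * Γ ^ 2 * phi (l * T)) / l := by
    field_simp; ring
  rw [hscale]
  exact div_neg_of_neg_of_pos hneg hl

lemma four_mul_sq_mul_le {c q p L r : ℝ} (hc : 1 ≤ c) (hq : 1 ≤ q) (hp : 0 ≤ p) (hL : 1 ≤ L)
    (hr : 0 < r) (hr1 : r ≤ 1) : 4 * q ^ 2 * p ≤ 5 * c ^ 2 * q ^ 3 * p * L / r ^ 2 := by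
  rw [le_div_iff₀ (by positivity)]
  have hr2 : r ^ 2 ≤ 1 := pow_le_one₀ hr.le hr1
  have hcqL : 1 ≤ c ^ 2 * q * L := one_le_mul_of_one_le_of_one_le
    (one_le_mul_of_one_le_of_one_le (one_le_pow₀ hc) hq) hL
  calc 4 * q ^ 2 * p * r ^ 2 ≤ 4 * q ^ 2 * p := mul_le_of_le_one_right (by positivity) hr2
    _ ≤ 5 * (c ^ 2 * q * L) * (q ^ 2 * p) := by
      nlinarith [mul_le_mul_of_nonneg_right hcqL (by positivity : 0 ≤ q ^ 2 * p)]
    _ = 5 * c ^ 2 * q ^ 3 * p * L := by ring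

lemma thresholds_le {l m Γ q t : ℝ} (hl : 0 < l) (hlΓ : exp (exp 1) ≤ l * Γ) (hq : 1 ≤ q)
    (hm : 0 ≤ m * Γ) (hmq : m * Γ ≤ q) (ht : 4 * q ^ 2 * (l * Γ) ≤ l * t) :
    exp (exp 1) / l ≤ t ∧ 1 / l + 3 * m ^ 2 * Γ ^ 2 / l ≤ t := by
  have hlΓ1 : 1 ≤ l * Γ := (one_le_exp (exp_pos 1).le).trans hlΓ
  have hmq2 : (m * Γ) ^ 2 ≤ q ^ 2 := by gcongr
  have hq4 : 1 ≤ 4 * q ^ 2 := by nlinarith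
  rw [← add_div, div_le_iff₀ hl, div_le_iff₀ hl, mul_comm t]
  constructor
  · nlinarith [le_mul_of_one_le_left (by linarith : (0 : ℝ) ≤ l * Γ) hq4]
  · nlinarith [le_mul_of_one_le_right (by positivity : (0 : ℝ) ≤ 4 * q ^ 2) hlΓ1]

theorem stmt15_general (J : ℕ) (hJ : 1 ≤ J) (lam : Fin J → ℝ) (hlam : ∀ j, 0 < lam j)
    (lammax lbar Γ ρ B : ℝ) (W : ℝ → ℝ)
    (hlammax : ∀ j, lam j ≤ lammax) (hll : lammax ≤ lbar)
    (hρ0 : 0 ≤ ρ) (hρ : ρ < 1) (hΓ : 0 < Γ)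
    (hmin : ∀ j, Real.exp (2 * Real.exp 1) ≤ lam j * Γ)
    (hWnn : ∀ t : ℝ, 0 ≤ t → t ≤ B → 0 ≤ W t)
    (hW : ∀ t : ℝ,
      (∀ j, Real.exp (Real.exp 1) / lam j ≤ t ∧
        1 / lam j + 3 * lammax ^ 2 * Γ ^ 2 / lam j ≤ t) →
      W t ≤ t * (ρ - 1) + (4 * J + 3) * lbar * Γ ^ 2 * phi (lbar * t)) :
    B ≤ 5 * (4 * J + 3) ^ 2 * lbar ^ 3 * Γ ^ 4 / (1 - ρ) ^ 2 *
        Real.log (Real.log (2 * (4 * J + 3) * lbar ^ 2 * Γ ^ 2 / (1 - ρ))) := by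
  obtain ⟨j₀⟩ : Nonempty (Fin J) := ⟨⟨0, hJ⟩⟩
  have hmin' : ∀ j, exp (exp 1) ≤ lam j * Γ :=
    fun j => (exp_le_exp.2 (by linarith [exp_pos 1])).trans (hmin j)
  have hq : exp (exp 1) ≤ lbar * Γ := (hmin' j₀).trans (by gcongr; exact (hlammax j₀).trans hll)
  have hq1 : 1 ≤ lbar * Γ := (one_le_exp (exp_pos 1).le).trans hq
  have hlbar : 0 < lbar := pos_of_mul_pos_left (by linarith) hΓ.le
  have hc : (1 : ℝ) ≤ 4 * J + 3 := by linarith [(Nat.cast_nonneg J : (0 : ℝ) ≤ J)]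
  set K := (4 * J + 3) * lbar ^ 2 * Γ ^ 2 / (1 - ρ)
  have hK : exp (exp 1) ≤ K := by
    have hqK : (lbar * Γ) ^ 2 ≤ K := by
      rw [le_div_iff₀ (by linarith)]; nlinarith [sq_nonneg (lbar * Γ)]
    nlinarith
  rw [show 2 * (4 * J + 3) * lbar ^ 2 * Γ ^ 2 / (1 - ρ) = 2 * K by ring]
  set T := 5 * (4 * J + 3) ^ 2 * lbar ^ 3 * Γ ^ 4 / (1 - ρ) ^ 2 * log (log (2 * K))
  have hneg : T * (ρ - 1) + (4 * J + 3) * lbar * Γ ^ 2 * phi (lbar * T) < 0 :=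
    mul_sub_one_add_mul_phi_neg hlbar hρ hK (by simp only [T, K]; field_simp)
  have hthr : ∀ j, exp (exp 1) / lam j ≤ T ∧ 1 / lam j + 3 * lammax ^ 2 * Γ ^ 2 / lam j ≤ T := by
    intro j
    have hm : 0 ≤ lammax := ((hlam j).trans_le (hlammax j)).le
    refine thresholds_le (hlam j) (hmin' j) hq1 (by positivity) (by gcongr) ?_
    convert four_mul_sq_mul_le hc hq1 (mul_pos (hlam j) hΓ).le (one_le_log_log_two_mul hK)
      (by linarith : 0 < 1 - ρ) (by linarith) using 1
    simp only [T]; ring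
  by_contra! hBT
  linarith [hW T hthr, hWnn T ((div_pos (exp_pos _) (hlam j₀)).le.trans (hthr j₀).1) hBT.le]

/-- Theorem 3.3(i), abstracted: in the multiclass single-server robust system,
if the workload during the busy period starting at 0 is nonnegative and satisfies
W(t) ≤ t(ρ-1) + (4J+3) λ̄max Γ² φ(λ̄max t) for all t beyond the stated threshold, then the
busy-period length B satisfies
B ≤ (5(4J+3)² λ̄max³ Γ⁴/(1-ρ)²) ln ln (2(4J+3) λ̄max² Γ²/(1-ρ)). -/
theorem stmt15 (J : ℕ) (hJ : 1 ≤ J) (lam : Fin J → ℝ) (hlam : ∀ j, 0 < lam j)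
    (lammax lbar Γ ρ B : ℝ) (W : ℝ → ℝ)
    (hlammax : ∀ j, lam j ≤ lammax) (hll : lammax ≤ lbar)
    (hρ0 : 0 ≤ ρ) (hρ : ρ < 1) (hΓ : 0 < Γ)
    (hmin : ∀ j, Real.exp (2 * Real.exp 1) ≤ lam j * Γ)
    (hB : 0 ≤ B)
    (hWnn : ∀ t : ℝ, 0 ≤ t → t ≤ B → 0 ≤ W t)
    (hW : ∀ t : ℝ,
      (∀ j, Real.exp (Real.exp 1) / lam j ≤ t ∧
        1 / lam j + 3 * lammax ^ 2 * Γ ^ 2 / lam j ≤ t) →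
      W t ≤ t * (ρ - 1) + (4 * J + 3) * lbar * Γ ^ 2 * phi (lbar * t)) :
    B ≤ 5 * (4 * J + 3) ^ 2 * lbar ^ 3 * Γ ^ 4 / (1 - ρ) ^ 2 *
        Real.log (Real.log (2 * (4 * J + 3) * lbar ^ 2 * Γ ^ 2 / (1 - ρ))) :=
  stmt15_general J hJ lam hlam lammax lbar Γ ρ B W hlammax hll hρ0 hρ hΓ hmin hWnn hW
end

section
/- Let a, b > 0 with b/a ≥ e^(2e), and let x* > e^e be a critical point of U(x) = −a·x + 2b·√(x·ln(ln x)), i.e., −a + b·(1/ln x* + ln(ln x*))/√(x*·ln(ln x*)) = 0. Then, with α = b/a, we have α²·ln(ln α) ≤ x* ≤ 4α²·ln(ln α). -/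
open Real

/-!
Squaring the critical-point equation gives `x ln ln x = α² (1/ln x + ln ln x)²`. Since
`0 < 1/ln x < 0.4 < ln ln x` for `x > e^e`, this pins `x` between `α² ln ln x` and `2 α² ln ln x`.
The lower bound forces `x ≥ α`, hence `ln ln x ≥ ln ln α`. The upper bound gives
`ln x ≤ ln 2 + 2 ln α + ln ln ln x`, and since `ln ln ln x` is small compared to `ln x` this yields
`ln x ≤ (ln α)²` once `ln α ≥ 4`, i.e. `ln ln x ≤ 2 ln ln α`.
-/

lemma eq_div_sq_mul_sq_of_neg_add_div_sqrt_eq_zero {a b t y : ℝ} (ha : 0 < a)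
    (h : -a + b * t / √y = 0) : y = (b / a) ^ 2 * t ^ 2 := by
  have hsqrt : √y ≠ 0 := by
    rintro h0
    rw [h0, div_zero] at h
    linarith
  have hbt : b * t = a * √y := by
    rw [neg_add_eq_zero, eq_div_iff hsqrt] at h
    linarith
  have hsqrt_eq : √y = b / a * t := by
    field_simp
    linarith
  rw [← sq_sqrt (sqrt_ne_zero'.mp hsqrt).le, hsqrt_eq]
  ring

lemma log_le_div_exp_one {y : ℝ} (hy : 0 < y) : log y ≤ y / exp 1 := by
  have h := log_le_sub_one_of_pos (div_pos hy (exp_pos 1))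
  rw [log_div hy.ne' (exp_pos 1).ne', log_exp] at h
  linarith

lemma exp_one_lt_log_of_exp_exp_lt {x : ℝ} (hx : exp (exp 1) < x) : exp 1 < log x :=
  (lt_log_iff_exp_lt (lt_trans (exp_pos _) hx)).mpr hx

lemma one_lt_log_log_of_exp_exp_lt {x : ℝ} (hx : exp (exp 1) < x) : 1 < log (log x) :=
  (lt_log_iff_exp_lt (lt_trans (exp_pos 1) (exp_one_lt_log_of_exp_exp_lt hx))).mpr
    (exp_one_lt_log_of_exp_exp_lt hx)

section CriticalPoint

variable {α x : ℝ} (hx : exp (exp 1) < x)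
  (hcrit : x * log (log x) = α ^ 2 * (1 / log x + log (log x)) ^ 2)
include hx hcrit

lemma sq_mul_log_log_le_of_crit : α ^ 2 * log (log x) ≤ x := by
  have hL := one_lt_log_log_of_exp_exp_lt hx
  have hinv : 0 < 1 / log x :=
    one_div_pos.mpr (lt_trans (exp_pos 1) (exp_one_lt_log_of_exp_exp_lt hx))
  have hsq : log (log x) ^ 2 ≤ (1 / log x + log (log x)) ^ 2 := by gcongr; linarith
  have h : α ^ 2 * log (log x) * log (log x) ≤ x * log (log x) := by
    rw [hcrit]
    nlinarith [mul_le_mul_of_nonneg_left hsq (sq_nonneg α)]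
  exact le_of_mul_le_mul_right h (by linarith)

lemma le_two_mul_sq_mul_log_log_of_crit : x ≤ 2 * α ^ 2 * log (log x) := by
  have hL := one_lt_log_log_of_exp_exp_lt hx
  have hlx := exp_one_lt_log_of_exp_exp_lt hx
  -- `1 / ln x < 1 / e < 0.4`, and `(t + 0.4)² ≤ 2 t²` for `t ≥ 1`
  have hinv : 1 / log x < 0.4 := by
    rw [div_lt_iff₀ (by linarith [exp_one_gt_d9])]
    linarith [exp_one_gt_d9]
  have hinv_pos : 0 < 1 / log x := one_div_pos.mpr (by linarith [exp_one_gt_d9])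
  have hsq : (1 / log x + log (log x)) ^ 2 ≤ 2 * log (log x) ^ 2 := by nlinarith
  have h : x * log (log x) ≤ 2 * α ^ 2 * log (log x) * log (log x) := by
    rw [hcrit]
    nlinarith [mul_le_mul_of_nonneg_left hsq (sq_nonneg α)]
  exact le_of_mul_le_mul_right h (by linarith)

end CriticalPoint

lemma log_log_le_two_mul_log_log {α x : ℝ} (hα : 4 ≤ log α) (hx : exp (exp 1) < x)
    (hup : x ≤ 2 * α ^ 2 * log (log x)) : log (log x) ≤ 2 * log (log α) := by
  have hL := one_lt_log_log_of_exp_exp_lt hx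
  have hlx := exp_one_lt_log_of_exp_exp_lt hx
  have hα0 : α ≠ 0 := by rintro rfl; norm_num at hα
  have hlog_up : log x ≤ log 2 + 2 * log α + log (log (log x)) := by
    calc log x ≤ log (2 * α ^ 2 * log (log x)) :=
          log_le_log (lt_trans (exp_pos _) hx) hup
      _ = log 2 + 2 * log α + log (log (log x)) := by
          rw [log_mul (by positivity) (by linarith), log_mul two_ne_zero (by positivity),
            log_pow]
          push_cast
          ring
  have hlogL : log (log (log x)) ≤ log (log x) - 1 := log_le_sub_one_of_pos (by linarith)
  have hL_le : log (log x) ≤ log x / exp 1 := log_le_div_exp_one (by linarith [exp_pos 1])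
  have hL_half : log x / exp 1 ≤ log x / 2 :=
    div_le_div_of_nonneg_left (by linarith [exp_pos 1]) two_pos exp_one_gt_two.le
  have hlx_le : log x ≤ log α ^ 2 := by
    nlinarith [log_two_lt_d9]
  calc log (log x) ≤ log (log α ^ 2) := log_le_log (by linarith [exp_pos 1]) hlx_le
    _ = 2 * log (log α) := by rw [log_pow]; push_cast; ring

theorem stmt16_general (a b xstar : ℝ) (ha : 0 < a)
    (hba : Real.exp (2 * Real.exp 1) ≤ b / a)
    (hx : Real.exp (Real.exp 1) < xstar)
    (hcrit : -a + b * (1 / Real.log xstar + Real.log (Real.log xstar)) /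
        Real.sqrt (xstar * Real.log (Real.log xstar)) = 0) :
    (b / a) ^ 2 * Real.log (Real.log (b / a)) ≤ xstar ∧
      xstar ≤ 4 * (b / a) ^ 2 * Real.log (Real.log (b / a)) := by
  set α := b / a
  have hlogα : 2 * exp 1 ≤ log α := (le_log_iff_exp_le (lt_of_lt_of_le (exp_pos _) hba)).mpr hba
  have hα : 1 < α := lt_of_lt_of_le (one_lt_exp_iff.mpr (by positivity)) hba
  have hL := one_lt_log_log_of_exp_exp_lt hx
  have hkey := eq_div_sq_mul_sq_of_neg_add_div_sqrt_eq_zero ha hcrit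
  have hlow := sq_mul_log_log_le_of_crit hx hkey
  have hup := le_two_mul_sq_mul_log_log_of_crit hx hkey
  constructor
  · have hαx : α ≤ xstar := by nlinarith
    have hloglog : log (log α) ≤ log (log xstar) :=
      log_le_log (log_pos hα) (log_le_log (by linarith) hαx)
    nlinarith
  · have hloglog := log_log_le_two_mul_log_log (by linarith [exp_one_gt_two]) hx hup
    nlinarith

/-- if b/a ≥ e^(2e) and x* > e^e is a critical point of
U(x) = -a x + 2b √(x ln ln x), i.e. -a + b (1/ln x* + ln ln x*)/√(x* ln ln x*) = 0,
then with α = b/a : α² ln ln α ≤ x* ≤ 4 α² ln ln α. -/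
theorem stmt16 (a b xstar : ℝ) (ha : 0 < a) (hb : 0 < b)
    (hba : Real.exp (2 * Real.exp 1) ≤ b / a)
    (hx : Real.exp (Real.exp 1) < xstar)
    (hcrit : -a + b * (1 / Real.log xstar + Real.log (Real.log xstar)) /
        Real.sqrt (xstar * Real.log (Real.log xstar)) = 0) :
    (b / a) ^ 2 * Real.log (Real.log (b / a)) ≤ xstar ∧
      xstar ≤ 4 * (b / a) ^ 2 * Real.log (Real.log (b / a)) :=
  stmt16_general a b xstar ha hba hx hcrit
end
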